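/- arXiv:2412.02866 — 4 statements merged into one kernel-verified Lean document; each statement's English description precedes it below -/
import Mathlib

section
/- Let d ≥ 2 be an integer, let a₁, …, a_d be integers, not all zero, with greatest common divisor 1, let s = max_i |a_i|, and let n ≥ s be a positive integer. Let 𝓛 = {(x₁, …, x_d) ∈ ℤ^d : a₁x₁ + ⋯ + a_d x_d = 0}. If the set 𝓛 ∩ [n]^d spans a (d−1)-dimensional linear subspace of ℝ^d, then |𝓛 ∩ [n]^d| ≤ 3^d · n^{d−1} / s. -/
/-!
Pick `i` with `|aᵢ| = s` and forget the `i`-th coordinate. As `aᵢ ≠ 0` this is injective on the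
solutions in `[n]^d`, and it lands in the points `z ∈ [n]^(d-1)` with `s ∣ ∑_{j ≠ i} aⱼ zⱼ`.
Solutions of a congruence `m ∣ ∑ bⱼ yⱼ - c` in `[n]^e`, with the `bⱼ` and `m` coprime, number at
most `3^e nᵉ (1/m + 1/n)`: with `g = gcd(m, b₀)`, the last `e` coordinates solve the congruence
modulo `g` (induction), and once they are fixed `y₀` lies in one residue class modulo `m / g`,
so it takes at most `n g / m + 1` values. Finally `1/n ≤ 1/s`.
-/

open Finset

lemma card_Icc_filter_modEq_le (n : ℕ) {k : ℤ} (hk : 0 < k) (v : ℤ) :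
    (#{x ∈ Icc 1 (n : ℤ) | x ≡ v [ZMOD k]} : ℝ) ≤ n / k + 1 := by
  have hIcc : Icc 1 (n : ℤ) = Ioc 0 (n : ℤ) := by ext; simp only [mem_Icc, mem_Ioc]; omega
  have hcard := Int.Ioc_filter_modEq_card 0 n hk v
  rw [← hIcc] at hcard
  have hfloor : (⌊((n : ℤ) - v : ℚ) / k⌋ - ⌊((0 : ℤ) - v : ℚ) / k⌋ : ℚ) < n / k + 1 := by
    have h1 := Int.floor_le (((n : ℤ) - v : ℚ) / k)
    have h2 := Int.sub_one_lt_floor (((0 : ℤ) - v : ℚ) / k)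
    have : ((n : ℤ) - v : ℚ) / k - ((0 : ℤ) - v : ℚ) / k = n / k := by push_cast; ring
    linarith
  have hq : ((#{x ∈ Icc 1 (n : ℤ) | x ≡ v [ZMOD k]} : ℤ) : ℚ) ≤ n / k + 1 := by
    rw [hcard]
    push_cast
    exact max_le hfloor.le (by positivity)
  exact_mod_cast hq

lemma card_Icc_filter_dvd_mul_sub_le (n : ℕ) {m : ℤ} (hm : 0 < m) (b c : ℤ) :
    (#{v ∈ Icc 1 (n : ℤ) | m ∣ b * v - c} : ℝ) ≤ n / (m / Int.gcd m b : ℤ) + 1 := by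
  have hk : 0 < m / Int.gcd m b :=
    Int.ediv_pos_of_pos_of_dvd hm (Int.natCast_nonneg _) (Int.gcd_dvd_left m b)
  rcases Finset.eq_empty_or_nonempty {v ∈ Icc 1 (n : ℤ) | m ∣ b * v - c} with h | ⟨v₀, hv₀⟩
  · rw [h, card_empty, Nat.cast_zero]
    positivity
  refine le_trans (Nat.cast_le.mpr (card_le_card ?_)) (card_Icc_filter_modEq_le n hk v₀)
  intro v hv
  simp only [mem_filter] at hv hv₀ ⊢
  refine ⟨hv.1, Int.ModEq.cancel_left_div_gcd hm ?_⟩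
  exact ((Int.modEq_iff_dvd.mpr hv.2).symm.trans (Int.modEq_iff_dvd.mpr hv₀.2))

noncomputable def congrSolutions {e : ℕ} (n : ℕ) (b : Fin e → ℤ) (m c : ℤ) : Finset (Fin e → ℤ) :=
  {y ∈ Fintype.piFinset fun _ => Icc 1 (n : ℤ) | m ∣ ∑ i, b i * y i - c}

lemma card_congrSolutions_succ_le {e : ℕ} (n : ℕ) (b : Fin (e + 1) → ℤ) {m : ℤ} (hm : 0 < m)
    (c : ℤ) :
    (#(congrSolutions n b m c) : ℝ) ≤
      #(congrSolutions n (Fin.tail b) (Int.gcd m (b 0)) c) *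
        (n / (m / Int.gcd m (b 0) : ℤ) + 1) := by
  have hg_m : (Int.gcd m (b 0) : ℤ) ∣ m := Int.gcd_dvd_left _ _
  have hg_b : (Int.gcd m (b 0) : ℤ) ∣ b 0 := Int.gcd_dvd_right _ _
  have hmaps : Set.MapsTo Fin.tail (congrSolutions n b m c : Set (Fin (e + 1) → ℤ))
      (congrSolutions n (Fin.tail b) (Int.gcd m (b 0)) c) := by
    intro y hy
    simp only [congrSolutions, coe_filter, Fintype.mem_piFinset, Set.mem_ofPred_eq,
      Fin.sum_univ_succ] at hy ⊢
    refine ⟨fun i => hy.1 i.succ, ?_⟩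
    have h := dvd_sub (hg_m.trans hy.2) (hg_b.mul_right (y 0))
    rwa [add_sub_assoc, add_sub_cancel_left] at h
  have hfiber : ∀ z : Fin e → ℤ, #{y ∈ congrSolutions n b m c | Fin.tail y = z} ≤
      #{v ∈ Icc 1 (n : ℤ) | m ∣ b 0 * v - (c - ∑ i, Fin.tail b i * z i)} := by
    intro z
    refine card_le_card_of_injOn (fun y => y 0) ?_ ?_
    · intro y hy
      simp only [congrSolutions, coe_filter, mem_filter, Fintype.mem_piFinset,
        Set.mem_ofPred_eq, Fin.sum_univ_succ] at hy ⊢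
      obtain ⟨⟨hbox, hdvd⟩, rfl⟩ := hy
      refine ⟨hbox 0, ?_⟩
      convert hdvd using 1
      simp only [Fin.tail]
      ring
    · intro y hy y' hy' h
      simp only [coe_filter, Set.mem_ofPred_eq] at hy hy'
      rw [← Fin.cons_self_tail y, ← Fin.cons_self_tail y', hy.2, hy'.2]
      exact congrArg (fun v => (Fin.cons v z : Fin (e + 1) → ℤ)) h
  calc (#(congrSolutions n b m c) : ℝ)
      = ∑ z ∈ congrSolutions n (Fin.tail b) (Int.gcd m (b 0)) c,
          (#{y ∈ congrSolutions n b m c | Fin.tail y = z} : ℝ) := by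
        exact_mod_cast card_eq_sum_card_fiberwise hmaps
    _ ≤ ∑ _z ∈ congrSolutions n (Fin.tail b) (Int.gcd m (b 0)) c,
          ((n : ℝ) / (m / Int.gcd m (b 0) : ℤ) + 1) :=
        sum_le_sum fun z _ =>
          (Nat.cast_le.mpr (hfiber z)).trans (card_Icc_filter_dvd_mul_sub_le n hm _ _)
    _ = _ := by rw [sum_const, nsmul_eq_mul]

lemma one_div_add_one_div_mul_div_add_one_le {g k n : ℝ} (hg : 1 ≤ g) (hk : 1 ≤ k) (hn : 1 ≤ n) :
    (1 / g + 1 / n) * (n / k + 1) ≤ 3 * n * (1 / (g * k) + 1 / n) := by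
  have h₁ : 1 / g ≤ 1 := div_le_one_of_le₀ hg (by linarith)
  have h₂ : 1 / k ≤ 1 := div_le_one_of_le₀ hk (by linarith)
  have h₃ : 1 / n ≤ 1 := div_le_one_of_le₀ hn (by linarith)
  have hnm : 0 ≤ n / (g * k) := by positivity
  calc (1 / g + 1 / n) * (n / k + 1) = n / (g * k) + 1 / g + 1 / k + 1 / n := by
        field_simp
        ring
    _ ≤ 3 * (n / (g * k)) + 3 := by linarith
    _ = 3 * n * (1 / (g * k) + 1 / n) := by field_simp

theorem card_congrSolutions_le {n : ℕ} (hn : 0 < n) {e : ℕ} (b : Fin e → ℤ) {m : ℤ} (hm : 0 < m)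
    (c : ℤ) (hcop : ∀ k : ℤ, (∀ i, k ∣ b i) → k ∣ m → IsUnit k) :
    (#(congrSolutions n b m c) : ℝ) ≤ 3 ^ e * n ^ e * (1 / m + 1 / n) := by
  induction e generalizing m c with
  | zero =>
    have hm1 : m = 1 := by
      rcases Int.isUnit_iff.mp (hcop m finZeroElim dvd_rfl) with h | h <;> omega
    have hcard : #(congrSolutions n b m c) ≤ 1 := by
      simpa using card_le_univ (congrSolutions n b m c)
    subst hm1
    have : (0 : ℝ) ≤ 1 / n := by positivity
    have : (#(congrSolutions n b 1 c) : ℝ) ≤ 1 := by exact_mod_cast hcard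
    simp only [pow_zero, one_mul, Int.cast_one, div_one]
    linarith
  | succ e ih =>
    set g : ℤ := (Int.gcd m (b 0) : ℤ) with hg
    have hg_pos : 0 < g := by simpa [hg] using Int.gcd_pos_of_ne_zero_left (b 0) hm.ne'
    have hk_pos : 0 < m / g := Int.ediv_pos_of_pos_of_dvd hm hg_pos.le (Int.gcd_dvd_left _ _)
    have hm_eq : (m : ℝ) = g * (m / g : ℤ) := by
      exact_mod_cast (Int.mul_ediv_cancel' (Int.gcd_dvd_left m (b 0))).symm
    have hcop' : ∀ k : ℤ, (∀ i, k ∣ Fin.tail b i) → k ∣ g → IsUnit k := fun k hk hkg =>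
      hcop k (Fin.cases (hkg.trans (Int.gcd_dvd_right _ _)) hk) (hkg.trans (Int.gcd_dvd_left _ _))
    have hnR : (1 : ℝ) ≤ n := by exact_mod_cast hn
    have hgR : (1 : ℝ) ≤ g := by exact_mod_cast hg_pos
    have hkR : (1 : ℝ) ≤ (m / g : ℤ) := by exact_mod_cast hk_pos
    calc (#(congrSolutions n b m c) : ℝ)
        ≤ #(congrSolutions n (Fin.tail b) g c) * (n / (m / g : ℤ) + 1) :=
          card_congrSolutions_succ_le n b hm c
      _ ≤ 3 ^ e * n ^ e * (1 / g + 1 / n) * (n / (m / g : ℤ) + 1) := by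
          gcongr
          exact ih (Fin.tail b) hg_pos c hcop'
      _ = 3 ^ e * n ^ e * ((1 / g + 1 / n) * (n / (m / g : ℤ) + 1)) := by ring
      _ ≤ 3 ^ e * n ^ e * (3 * n * (1 / (g * (m / g : ℤ)) + 1 / n)) := by
          exact mul_le_mul_of_nonneg_left
            (one_div_add_one_div_mul_div_add_one_le hgR hkR hnR) (by positivity)
      _ = 3 ^ (e + 1) * n ^ (e + 1) * (1 / m + 1 / n) := by rw [hm_eq]; ring

lemma ncard_solutions_le_card_congrSolutions {e : ℕ} (n : ℕ) (a : Fin (e + 1) → ℤ)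
    {i : Fin (e + 1)} (hi : a i ≠ 0) :
    ({x : Fin (e + 1) → ℤ | ∑ j, a j * x j = 0} ∩ {x | ∀ j, 1 ≤ x j ∧ x j ≤ (n : ℤ)}).ncard ≤
      #(congrSolutions n (fun j => a (i.succAbove j)) (a i).natAbs 0) := by
  have hrest : ∀ x : Fin (e + 1) → ℤ, ∑ j, a j * x j = 0 →
      ∑ j, a (i.succAbove j) * x (i.succAbove j) = -(a i * x i) := by
    intro x hx
    rw [Fin.sum_univ_succAbove _ i] at hx
    linarith
  rw [← Set.ncard_coe_finset]
  refine Set.ncard_le_ncard_of_injOn (fun x j => x (i.succAbove j)) ?_ ?_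
  · rintro x ⟨hsum, hbox⟩
    simp only [congrSolutions, coe_filter, Fintype.mem_piFinset, mem_Icc, Set.mem_ofPred_eq]
    refine ⟨fun j => hbox _, ?_⟩
    rw [hrest x hsum, sub_zero, Int.natAbs_dvd]
    exact (dvd_mul_right _ _).neg_right
  · rintro x ⟨hx, -⟩ y ⟨hy, -⟩ hxy
    have hxy' : ∀ j, x (i.succAbove j) = y (i.succAbove j) := congrFun hxy
    have hi' : x i = y i := by
      have h := hrest x hx
      simp only [hxy'] at h
      rw [hrest y hy] at h
      exact (mul_left_cancel₀ hi (neg_injective h)).symm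
    exact funext ((Fin.forall_iff_succAbove i).mpr ⟨hi', hxy'⟩)

theorem stmt4_general (d : ℕ) (a : Fin d → ℤ) (ha : a ≠ 0)
    (hgcd : Finset.univ.gcd a = 1)
    (s : ℕ) (hs : s = Finset.univ.sup fun i => (a i).natAbs)
    (n : ℕ) (hns : s ≤ n)
    (L : Set (Fin d → ℤ)) (hL : L = {x | ∑ i, a i * x i = 0}) :
    ((L ∩ {x | ∀ i, 1 ≤ x i ∧ x i ≤ (n : ℤ)}).ncard : ℝ) ≤
      3 ^ d * (n : ℝ) ^ (d - 1) / (s : ℝ) := by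
  subst hL
  obtain ⟨e, rfl⟩ : ∃ e, d = e + 1 :=
    Nat.exists_eq_succ_of_ne_zero fun h => ha (by subst h; exact Subsingleton.elim _ _)
  obtain ⟨i, -, hi⟩ := exists_mem_eq_sup univ univ_nonempty fun i => (a i).natAbs
  obtain ⟨j, hj⟩ := Function.ne_iff.mp ha
  have hs_pos : 0 < s :=
    hs ▸ (Int.natAbs_pos.mpr hj).trans_le (le_sup (f := fun i => (a i).natAbs) (mem_univ j))
  rw [hi] at hs
  have hcop : ∀ k : ℤ, (∀ j, k ∣ a (i.succAbove j)) → k ∣ (a i).natAbs → IsUnit k := by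
    intro k hk hki
    refine isUnit_of_dvd_one (hgcd ▸ Finset.dvd_gcd_iff.mpr fun j _ => ?_)
    exact (Fin.forall_iff_succAbove (P := fun j => k ∣ a j) i).mpr ⟨Int.dvd_natAbs.mp hki, hk⟩ j
  have hsR : (0 : ℝ) < s := by exact_mod_cast hs_pos
  have hsn : (1 : ℝ) / n ≤ 1 / s := one_div_le_one_div_of_le hsR (by exact_mod_cast hns)
  calc ((_ : Set (Fin (e + 1) → ℤ)).ncard : ℝ)
      ≤ #(congrSolutions n (fun j => a (i.succAbove j)) (s : ℤ) 0) := by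
        rw [hs]
        exact_mod_cast ncard_solutions_le_card_congrSolutions n a
          (Int.natAbs_ne_zero.mp (hs ▸ hs_pos.ne'))
    _ ≤ 3 ^ e * n ^ e * (1 / s + 1 / n) := by
        have := card_congrSolutions_le (hs_pos.trans_le hns) _ (by omega) 0 (hs ▸ hcop)
        rwa [Int.cast_natCast] at this
    _ ≤ 3 ^ e * n ^ e * (1 / s + 1 / s) := by gcongr
    _ = 3 ^ e * 2 * n ^ e / s := by ring
    _ ≤ 3 ^ (e + 1) * (n : ℝ) ^ (e + 1 - 1) / s := by
        rw [Nat.add_sub_cancel, pow_succ]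
        gcongr
        norm_num

theorem stmt4 (d : ℕ) (hd : 2 ≤ d) (a : Fin d → ℤ) (ha : a ≠ 0)
    (hgcd : Finset.univ.gcd a = 1)
    (s : ℕ) (hs : s = Finset.univ.sup fun i => (a i).natAbs)
    (n : ℕ) (hn : 0 < n) (hns : s ≤ n)
    (L : Set (Fin d → ℤ)) (hL : L = {x | ∑ i, a i * x i = 0})
    (hspan : Module.finrank ℝ (Submodule.span ℝ
      ((fun x : Fin d → ℤ => (fun i => (x i : ℝ) : Fin d → ℝ)) ''
        (L ∩ {x | ∀ i, 1 ≤ x i ∧ x i ≤ (n : ℤ)}))) = d - 1) :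
    ((L ∩ {x | ∀ i, 1 ≤ x i ∧ x i ≤ (n : ℤ)}).ncard : ℝ) ≤
      3 ^ d * (n : ℝ) ^ (d - 1) / (s : ℝ) :=
  stmt4_general d a ha hgcd s hs n hns L hL
end

section
/- Let d₀ ≥ 2 and t ≥ 1 be integers and c > 0 a real number. Then there exists a constant c₁ = c₁(c, d₀, t) with the following property. Let P and Q be finite sets with |P| = m and |Q| = n, and let E ⊆ P × Q. For q ∈ Q write N(q) = {p ∈ P : (p, q) ∈ E}. Suppose that for every positive integer z and every subset P′ ⊆ P with |P′| = z one has |{N(q) ∩ P′ : q ∈ Q}| ≤ c·z^{d₀}, and suppose there are no subsets P″ ⊆ P and Q″ ⊆ Q with |P″| = |Q″| = t and P″ × Q″ ⊆ E. Then |E| ≤ c₁ (m·n^{1−1/d₀} + n). -/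
/-!
Write `m = |P|`, `n = |Q|` and `deg q = |N(q)|`, so that `|E| = ∑_{k ≥ 1} #{q : deg q ≥ k}`.
Fix `k ≥ 2t + 8` and let `R` be a uniformly random `z`-subset of `P` with `z ≈ (2t + 8) m / k`.
For `deg q ≥ k`, `|N(q) ∩ R|` is hypergeometric with mean at least `2t + 8` and variance at
most its mean, so by Chebyshev `|N(q) ∩ R| ≥ t` for at least half of the choices of `R`.
For a fixed `R`, at most `c z^{d₀}` distinct traces `N(q) ∩ R` occur, and since there is no
`K_{t,t}`, a trace with at least `t` points is shared by fewer than `t` vertices `q`. Double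
counting gives `#{q : deg q ≥ k} ≤ C (m / k)^{d₀}`. Summing over `k`, the layers below a
threshold `K ≈ C^{1/d₀} m n^{-1/d₀}` contribute at most `K n`, and, as `d₀ ≥ 2`, the tail
`∑_{k > K} C (m / k)^{d₀}` is at most `K · C (m / K)^{d₀} ≤ K n`.
-/

open Finset

section Sampling

variable {α : Type*} [DecidableEq α] {P S : Finset α}

lemma card_filter_powersetCard_superset_mul_choose {T : Finset α} (hT : T ⊆ P) (z : ℕ) :
    #{R ∈ P.powersetCard z | T ⊆ R} * (#P).choose #T = (#P).choose z * z.choose #T := by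
  rcases le_or_gt #T z with hTz | hzT
  · rw [card_filter_powersetCard_subset T P z hT hTz, Nat.choose_mul hTz, mul_comm]
  · rw [Nat.choose_eq_zero_of_lt hzT, mul_zero, mul_eq_zero, card_eq_zero, filter_eq_empty_iff]
    refine Or.inl fun R hR hTR => ?_
    exact absurd ((card_le_card hTR).trans (mem_powersetCard.1 hR).2.le) hzT.not_ge

lemma choose_mul_sum_choose_card_inter (hS : S ⊆ P) (k z : ℕ) :
    (#P).choose k * ∑ R ∈ P.powersetCard z, (#(S ∩ R)).choose k
      = (#S).choose k * (#P).choose z * z.choose k := by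
  have hsubsets : ∀ R, (#(S ∩ R)).choose k = #{T ∈ S.powersetCard k | T ⊆ R} := by
    intro R
    rw [← card_powersetCard]
    congr 1
    ext T
    simp only [mem_powersetCard, subset_inter_iff, mem_filter]
    tauto
  simp_rw [hsubsets]
  have hdouble : ∑ R ∈ P.powersetCard z, #{T ∈ S.powersetCard k | T ⊆ R}
      = ∑ T ∈ S.powersetCard k, #{R ∈ P.powersetCard z | T ⊆ R} :=
    (sum_card_bipartiteAbove_eq_sum_card_bipartiteBelow _).symm
  calc _ = ∑ T ∈ S.powersetCard k, (#P).choose z * z.choose k := by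
        rw [hdouble, mul_sum]
        refine sum_congr rfl fun T hT => ?_
        obtain ⟨hTS, rfl⟩ := mem_powersetCard.1 hT
        rw [mul_comm, card_filter_powersetCard_superset_mul_choose (hTS.trans hS)]
    _ = _ := by rw [sum_const, card_powersetCard, smul_eq_mul, mul_assoc]

/-- The variance `z s (m - s) (m - z) / (m² (m - 1))` of the hypergeometric distribution,
multiplied by `m² (m - 1) · C(m, z)`. -/
lemma sub_one_mul_sum_sq_sub_card_inter (hS : S ⊆ P) (z : ℕ) :
    ((#P : ℝ) - 1) * ∑ R ∈ P.powersetCard z, ((#P : ℝ) * #(S ∩ R) - z * #S) ^ 2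
      = z * #S * (#P - #S) * (#P - z) * (#P).choose z := by
  have h1 := choose_mul_sum_choose_card_inter hS 1 z
  have h2 := choose_mul_sum_choose_card_inter hS 2 z
  simp only [Nat.choose_one_right] at h1
  replace h1 := congrArg (Nat.cast : ℕ → ℝ) h1
  replace h2 := congrArg (Nat.cast : ℕ → ℝ) h2
  push_cast [Nat.cast_choose_two] at h1 h2
  have hexpand : ∑ R ∈ P.powersetCard z, ((#P : ℝ) * #(S ∩ R) - z * #S) ^ 2
      = 2 * #P ^ 2 * ∑ R ∈ P.powersetCard z, (#(S ∩ R) : ℝ) * (#(S ∩ R) - 1) / 2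
        + (#P ^ 2 - 2 * #P * z * #S) * ∑ R ∈ P.powersetCard z, (#(S ∩ R) : ℝ)
        + (z * #S) ^ 2 * ∑ R ∈ P.powersetCard z, (1 : ℝ) := by
    rw [mul_sum, mul_sum, mul_sum, ← sum_add_distrib, ← sum_add_distrib]
    exact sum_congr rfl fun R _ => by ring
  rw [hexpand, sum_const, card_powersetCard, nsmul_eq_mul, mul_one]
  linear_combination 4 * (#P : ℝ) * h2 + (#P - 1) * (#P - 2 * z * #S) * h1

lemma choose_le_two_mul_card_filter_le_card_inter (hS : S ⊆ P) (hP : P.Nonempty) {t z : ℕ}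
    (hz : z ≤ #P) (hzS : (2 * t + 8) * #P ≤ z * #S) :
    (#P).choose z ≤ 2 * #{R ∈ P.powersetCard z | t ≤ #(S ∩ R)} := by
  -- Chebyshev: a `z`-subset meeting `S` in fewer than `t` points deviates from the mean
  -- `z |S| / |P| ≥ 2t + 8` by at least half of it.
  set B := {R ∈ P.powersetCard z | ¬ t ≤ #(S ∩ R)}
  have hsplit : #{R ∈ P.powersetCard z | t ≤ #(S ∩ R)} + #B = (#P).choose z := by
    rw [← card_powersetCard]; exact card_filter_add_card_filter_not _
  suffices 2 * #B ≤ (#P).choose z by omega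
  have hsP : (#S : ℝ) ≤ #P := by exact_mod_cast card_le_card hS
  have hzP : (z : ℝ) ≤ #P := by exact_mod_cast hz
  have hzs : (2 * t + 8) * (#P : ℝ) ≤ z * #S := by exact_mod_cast hzS
  have hm : (1 : ℝ) ≤ #P := by exact_mod_cast hP.card_pos
  have ht : (0 : ℝ) ≤ t := Nat.cast_nonneg t
  set m : ℝ := (#P : ℝ)
  set zs : ℝ := (z : ℝ) * (#S : ℝ)
  have hm8 : 8 ≤ m := by nlinarith
  have hbad : ∀ R ∈ B, (zs / 2) ^ 2 ≤ (m * #(S ∩ R) - zs) ^ 2 := by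
    intro R hR
    have hlt : (#(S ∩ R) : ℝ) ≤ t := by exact_mod_cast (not_le.1 (mem_filter.1 hR).2).le
    have : m * #(S ∩ R) ≤ zs / 2 := by nlinarith
    have h0 : 0 ≤ m * #(S ∩ R) := by positivity
    rw [← neg_sub, neg_sq]
    exact pow_le_pow_left₀ (by linarith) (by linarith) 2
  have hB : (#B : ℝ) * (zs / 2) ^ 2 ≤ ∑ R ∈ P.powersetCard z, (m * #(S ∩ R) - zs) ^ 2 :=
    calc (#B : ℝ) * (zs / 2) ^ 2 ≤ ∑ R ∈ B, (m * #(S ∩ R) - zs) ^ 2 := by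
          rw [← nsmul_eq_mul]; exact card_nsmul_le_sum _ _ _ hbad
      _ ≤ _ := sum_le_sum_of_subset_of_nonneg (filter_subset _ _) fun _ _ _ => sq_nonneg _
  have hvar : ∑ R ∈ P.powersetCard z, (m * #(S ∩ R) - zs) ^ 2 ≤ zs * m * (#P).choose z := by
    have h := sub_one_mul_sum_sq_sub_card_inter hS z
    have hs : (1 : ℝ) ≤ #S := by nlinarith
    refine le_of_mul_le_mul_left ?_ (by linarith : 0 < m - 1)
    have hprod : (m - #S) * (m - z) ≤ (m - 1) * m := by nlinarith
    have hN : 0 ≤ zs * (#P).choose z := by positivity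
    rw [h]
    nlinarith [mul_le_mul_of_nonneg_left hprod hN]
  have hzs0 : 0 < zs := by nlinarith
  have h4 : (#B : ℝ) * zs ≤ 4 * m * (#P).choose z := by
    refine le_of_mul_le_mul_right ?_ hzs0
    nlinarith
  have h8 : (#B : ℝ) * (8 * m) ≤ #B * zs := by gcongr; nlinarith
  have : (2 * #B : ℝ) ≤ (#P).choose z := by nlinarith
  exact_mod_cast this

end Sampling

section Traces

variable {α β : Type*} [DecidableEq α] {N : β → Finset α} {P : Finset α} {Q : Finset β} {t : ℕ}

lemma card_filter_le_card_inter_le_mul_card_image {R : Finset α} {Q₀ : Finset β} (hR : R ⊆ P)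
    (hQ₀ : Q₀ ⊆ Q) (hN : ∀ T ⊆ P, ∀ Q' ⊆ Q, #T = t → #Q' = t → ∃ q ∈ Q', ¬ T ⊆ N q) :
    #{q ∈ Q₀ | t ≤ #(N q ∩ R)} ≤ t * #(Q.image fun q => N q ∩ R) := by
  refine card_le_mul_card_image_of_maps_to
    (fun q hq => mem_image_of_mem _ (hQ₀ (mem_filter.1 hq).1)) t fun T _ => ?_
  by_contra! hfiber
  obtain ⟨Q', hQ'fiber, hQ't⟩ := exists_subset_card_eq hfiber.le
  obtain ⟨q₀, hq₀⟩ := card_pos.1 (t.zero_le.trans_lt hfiber)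
  simp only [mem_filter] at hq₀
  obtain ⟨T', hT'T, hT't⟩ := exists_subset_card_eq (hq₀.2 ▸ hq₀.1.2)
  have hT'P : T' ⊆ P := hT'T.trans (hq₀.2 ▸ inter_subset_right.trans hR)
  have hQ'Q : Q' ⊆ Q := fun q hq => hQ₀ (mem_filter.1 (mem_filter.1 (hQ'fiber hq)).1).1
  obtain ⟨q, hq, hT'q⟩ := hN T' hT'P Q' hQ'Q hT't hQ't
  have hqT : N q ∩ R = T := (mem_filter.1 (hQ'fiber hq)).2
  exact hT'q (hT'T.trans (hqT ▸ inter_subset_left))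

lemma exists_le_mul_le_add_one_mul {a k m : ℕ} (hak : a ≤ k) (hkm : k ≤ m) :
    ∃ z ≤ m, a * m ≤ z * k ∧ z * k ≤ (a + 1) * m := by
  have hmk : a * m ≤ m * k := by rw [mul_comm m]; exact Nat.mul_le_mul_right m hak
  have hm : ∃ z, a * m ≤ z * k := ⟨m, hmk⟩
  refine ⟨Nat.find hm, Nat.find_min' hm hmk, Nat.find_spec hm, ?_⟩
  rcases h : Nat.find hm with _ | z
  · simp
  · have hz : ¬ a * m ≤ z * k := Nat.find_min hm (by omega)
    rw [not_le] at hz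
    nlinarith

variable {d : ℕ} {c : ℝ}

lemma card_filter_le_card_le_le_of_le_mul (hNP : ∀ q ∈ Q, N q ⊆ P)
    (htrace : ∀ R ⊆ P, R.Nonempty → (#(Q.image fun q => N q ∩ R) : ℝ) ≤ c * #R ^ d)
    (hN : ∀ T ⊆ P, ∀ Q' ⊆ Q, #T = t → #Q' = t → ∃ q ∈ Q', ¬ T ⊆ N q)
    {k z : ℕ} (hz : 0 < z) (hzP : z ≤ #P) (hzk : (2 * t + 8) * #P ≤ z * k) :
    (#{q ∈ Q | k ≤ #(N q)} : ℝ) ≤ 2 * t * c * z ^ d := by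
  set Qk := {q ∈ Q | k ≤ #(N q)}
  have hP : P.Nonempty := card_pos.1 (hz.trans_le hzP)
  have hhit : ∀ q ∈ Qk, ((#P).choose z / 2 : ℝ) ≤ #{R ∈ P.powersetCard z | t ≤ #(N q ∩ R)} := by
    intro q hq
    have hq' := mem_filter.1 hq
    have := choose_le_two_mul_card_filter_le_card_inter (hNP q hq'.1) hP hzP
      (hzk.trans (Nat.mul_le_mul_left z hq'.2))
    rw [div_le_iff₀ two_pos]
    exact_mod_cast this.trans_eq (mul_comm _ _)
  have hfew : ∀ R ∈ P.powersetCard z, (#{q ∈ Qk | t ≤ #(N q ∩ R)} : ℝ) ≤ t * (c * z ^ d) := by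
    intro R hR
    obtain ⟨hRP, hRz⟩ := mem_powersetCard.1 hR
    calc (#{q ∈ Qk | t ≤ #(N q ∩ R)} : ℝ) ≤ t * #(Q.image fun q => N q ∩ R) := by
          exact_mod_cast card_filter_le_card_inter_le_mul_card_image hRP (filter_subset _ _) hN
      _ ≤ t * (c * z ^ d) := by
          gcongr
          rw [← hRz]
          exact htrace R hRP (card_pos.1 (hRz ▸ hz))
  have hcount := card_nsmul_le_card_nsmul (s := Qk) (t := P.powersetCard z)
    (fun q R => t ≤ #(N q ∩ R)) hhit hfew
  rw [card_powersetCard, nsmul_eq_mul, nsmul_eq_mul] at hcount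
  have hchoose : (0 : ℝ) < (#P).choose z := Nat.cast_pos.2 (Nat.choose_pos hzP)
  nlinarith

lemma card_filter_le_card_le_div_pow (hc : 0 ≤ c) (hNP : ∀ q ∈ Q, N q ⊆ P)
    (htrace : ∀ R ⊆ P, R.Nonempty → (#(Q.image fun q => N q ∩ R) : ℝ) ≤ c * #R ^ d)
    (hN : ∀ T ⊆ P, ∀ Q' ⊆ Q, #T = t → #Q' = t → ∃ q ∈ Q', ¬ T ⊆ N q)
    {k : ℕ} (hk : 2 * t + 8 ≤ k) :
    (#{q ∈ Q | k ≤ #(N q)} : ℝ) ≤ 2 * t * c * (2 * t + 9) ^ d * #P ^ d / k ^ d := by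
  rcases {q ∈ Q | k ≤ #(N q)}.eq_empty_or_nonempty with hQk | ⟨q₀, hq₀⟩
  · rw [hQk, card_empty, Nat.cast_zero]
    positivity
  have hkP : k ≤ #P := (mem_filter.1 hq₀).2.trans (card_le_card (hNP q₀ (mem_filter.1 hq₀).1))
  obtain ⟨z, hzP, hlow, hup⟩ := exists_le_mul_le_add_one_mul hk hkP
  have hz : 0 < z := by
    have : 0 < z * k := (Nat.mul_pos (by omega) (by omega)).trans_le hlow
    exact Nat.pos_of_ne_zero fun h => by simp [h] at this
  have hzk : (z : ℝ) ≤ (2 * t + 9) * #P / k := by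
    rw [le_div_iff₀ (by exact_mod_cast (by omega : 0 < k))]
    exact_mod_cast hup
  calc (#{q ∈ Q | k ≤ #(N q)} : ℝ)
      ≤ 2 * t * c * z ^ d := card_filter_le_card_le_le_of_le_mul hNP htrace hN hz hzP hlow
    _ ≤ 2 * t * c * ((2 * t + 9) * #P / k) ^ d := by gcongr
    _ = _ := by rw [div_pow, mul_pow]; ring

end Traces

section Layers

variable {β : Type*} {Q : Finset β}

lemma sum_eq_sum_Ioc_card_filter_le (f : β → ℕ) {M : ℕ} (hM : ∀ q ∈ Q, f q ≤ M) :
    ∑ q ∈ Q, f q = ∑ k ∈ Ioc 0 M, #{q ∈ Q | k ≤ f q} := by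
  have hdouble : ∑ q ∈ Q, #{k ∈ Ioc 0 M | k ≤ f q} = ∑ k ∈ Ioc 0 M, #{q ∈ Q | k ≤ f q} :=
    sum_card_bipartiteAbove_eq_sum_card_bipartiteBelow _
  rw [← hdouble]
  refine sum_congr rfl fun q hq => ?_
  have : {k ∈ Ioc 0 M | k ≤ f q} = Ioc 0 (f q) := by
    ext k
    simp only [mem_filter, mem_Ioc]
    have := hM q hq
    omega
  rw [this, Nat.card_Ioc, Nat.sub_zero]

lemma sum_Ioc_inv_pow_le {d K : ℕ} (hd : 2 ≤ d) (hK : K ≠ 0) (M : ℕ) :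
    ∑ k ∈ Ioc K M, ((k : ℝ) ^ d)⁻¹ ≤ ((K : ℝ) ^ (d - 1))⁻¹ := by
  have hK0 : (0 : ℝ) < K := Nat.cast_pos.2 (Nat.pos_of_ne_zero hK)
  calc ∑ k ∈ Ioc K M, ((k : ℝ) ^ d)⁻¹
      ≤ ∑ k ∈ Ioc K M, ((K : ℝ) ^ (d - 2))⁻¹ * ((k : ℝ) ^ 2)⁻¹ := by
        refine sum_le_sum fun k hk => ?_
        have hKk : (K : ℝ) ≤ k := by exact_mod_cast (mem_Ioc.1 hk).1.le
        rw [← mul_inv, ← pow_sub_mul_pow (k : ℝ) hd]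
        exact inv_anti₀ (by have := hK0.trans_le hKk; positivity) (by gcongr)
    _ = ((K : ℝ) ^ (d - 2))⁻¹ * ∑ k ∈ Ioc K M, ((k : ℝ) ^ 2)⁻¹ := by rw [mul_sum]
    _ ≤ ((K : ℝ) ^ (d - 2))⁻¹ * (K : ℝ)⁻¹ := by
        gcongr
        rcases le_total K M with h | h
        · exact (sum_Ioc_inv_sq_le_sub hK h).trans (sub_le_self _ (by positivity))
        · rw [Ioc_eq_empty (by omega), sum_empty]
          positivity
    _ = ((K : ℝ) ^ (d - 1))⁻¹ := by
        rw [← mul_inv, ← pow_succ]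
        congr 2
        omega

lemma sum_le_of_card_filter_le_div_pow (f : β → ℕ) {d K : ℕ} {A : ℝ} (hd : 2 ≤ d) (hK : K ≠ 0)
    (hA : 0 ≤ A) (htail : ∀ k, K < k → (#{q ∈ Q | k ≤ f q} : ℝ) ≤ A / k ^ d)
    (hAK : A ≤ K ^ d * #Q) :
    ∑ q ∈ Q, (f q : ℝ) ≤ 2 * K * #Q := by
  have hK0 : (0 : ℝ) < K := Nat.cast_pos.2 (Nat.pos_of_ne_zero hK)
  have hM : ∀ q ∈ Q, f q ≤ K + Q.sup f := fun q hq => (le_sup hq).trans (by omega)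
  rw [← Nat.cast_sum, sum_eq_sum_Ioc_card_filter_le f hM,
    ← sum_Ioc_consecutive _ (Nat.zero_le K) (by omega : K ≤ K + Q.sup f), Nat.cast_add]
  have hhead : ((∑ k ∈ Ioc 0 K, #{q ∈ Q | k ≤ f q} : ℕ) : ℝ) ≤ K * #Q := by
    have := sum_le_card_nsmul (Ioc 0 K) _ _ fun k _ => card_filter_le Q fun q => k ≤ f q
    rw [Nat.card_Ioc, smul_eq_mul] at this
    exact_mod_cast this
  have htail' : ((∑ k ∈ Ioc K (K + Q.sup f), #{q ∈ Q | k ≤ f q} : ℕ) : ℝ) ≤ K * #Q :=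
    calc ((∑ k ∈ Ioc K (K + Q.sup f), #{q ∈ Q | k ≤ f q} : ℕ) : ℝ)
        ≤ ∑ k ∈ Ioc K (K + Q.sup f), A * ((k : ℝ) ^ d)⁻¹ := by
          push_cast
          exact sum_le_sum fun k hk => (htail k (mem_Ioc.1 hk).1).trans_eq (div_eq_mul_inv _ _)
      _ ≤ A * ((K : ℝ) ^ (d - 1))⁻¹ := by
          rw [← mul_sum]
          gcongr
          exact sum_Ioc_inv_pow_le hd hK _
      _ ≤ K * #Q := by
          rw [← div_eq_mul_inv, div_le_iff₀ (pow_pos hK0 _), mul_right_comm,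
            mul_pow_sub_one (by omega)]
          exact hAK
  linarith

end Layers

lemma exists_nat_le_pow_mul_and_mul_le {A n : ℝ} (hA : 0 ≤ A) (hn : 0 < n) {d : ℕ} (hd : d ≠ 0)
    (K₀ : ℕ) : ∃ K : ℕ, K₀ ≤ K ∧ A ≤ K ^ d * n ∧
      K * n ≤ A ^ (1 / d : ℝ) * n ^ (1 - 1 / d : ℝ) + (K₀ + 1) * n := by
  set x := (A / n) ^ ((d : ℝ)⁻¹) with hxdef
  have hx0 : 0 ≤ x := by positivity
  have hxK : x ≤ (K₀ + ⌈x⌉₊ : ℕ) := (Nat.le_ceil x).trans (by push_cast; linarith)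
  refine ⟨K₀ + ⌈x⌉₊, by omega, ?_, ?_⟩
  · have hx : x ^ d = A / n := Real.rpow_inv_natCast_pow (by positivity) hd
    calc A = x ^ d * n := by rw [hx, div_mul_cancel₀ _ hn.ne']
      _ ≤ _ := by gcongr
  · have hxn : x * n = A ^ (1 / d : ℝ) * n ^ (1 - 1 / d : ℝ) := by
      rw [hxdef, one_div, Real.div_rpow hA hn.le, Real.rpow_sub hn, Real.rpow_one]
      field_simp
    push_cast
    nlinarith [Nat.ceil_lt_add_one hx0]

lemma card_eq_sum_card_filter {α β : Type*} [DecidableEq α] [DecidableEq β] {P : Finset α}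
    {Q : Finset β} {E : Finset (α × β)} (hE : ∀ e ∈ E, e.1 ∈ P ∧ e.2 ∈ Q) :
    #E = ∑ q ∈ Q, #{p ∈ P | (p, q) ∈ E} := by
  rw [card_eq_sum_card_fiberwise fun e he => (hE e he).2]
  refine sum_congr rfl fun q _ => card_nbij' Prod.fst (fun p => (p, q)) ?_ ?_ ?_ ?_
  · intro e he
    simp only [mem_coe, mem_filter] at he ⊢
    obtain ⟨he, rfl⟩ := he
    exact ⟨(hE e he).1, he⟩
  · intro p hp
    simp only [mem_coe, mem_filter] at hp ⊢
    exact ⟨hp.2, trivial⟩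
  · intro e he
    simp only [mem_coe, mem_filter] at he
    simp [← he.2]
  · intro p _
    rfl

lemma ncard_setOf_exists_mem_eq {β γ : Type*} [DecidableEq γ] (Q : Finset β) (f : β → γ) :
    {T | ∃ q ∈ Q, T = f q}.ncard = #(Q.image f) := by
  rw [← Set.ncard_coe_finset, coe_image]
  congr 1
  ext T
  simp [eq_comm]

theorem stmt6_general (d₀ t : ℕ) (hd : 2 ≤ d₀) (c : ℝ) (hc : 0 < c) :
    ∃ c₁ : ℝ, ∀ (α β : Type) [DecidableEq α] [DecidableEq β]
      (P : Finset α) (Q : Finset β) (E : Finset (α × β)),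
      (∀ e ∈ E, e.1 ∈ P ∧ e.2 ∈ Q) →
      (∀ z : ℕ, 0 < z → ∀ P' ⊆ P, P'.card = z →
        (({T | ∃ q ∈ Q, T = (P.filter fun p => (p, q) ∈ E) ∩ P'} :
          Set (Finset α)).ncard : ℝ) ≤ c * (z : ℝ) ^ d₀) →
      (¬ ∃ (P'' : Finset α) (Q'' : Finset β), P'' ⊆ P ∧ Q'' ⊆ Q ∧
        P''.card = t ∧ Q''.card = t ∧ ∀ p ∈ P'', ∀ q ∈ Q'', (p, q) ∈ E) →
      (E.card : ℝ) ≤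
        c₁ * ((P.card : ℝ) * (Q.card : ℝ) ^ ((1 : ℝ) - 1 / (d₀ : ℝ)) + (Q.card : ℝ)) := by
  set C : ℝ := 2 * t * c * (2 * t + 9) ^ d₀
  refine ⟨2 * C ^ (1 / d₀ : ℝ) + 2 * (2 * t + 9), fun α β _ _ P Q E hE hshatter hKtt => ?_⟩
  set N : β → Finset α := fun q => P.filter fun p => (p, q) ∈ E
  have hEN : (#E : ℝ) = ∑ q ∈ Q, (#(N q) : ℝ) := by exact_mod_cast card_eq_sum_card_filter hE
  rcases Q.eq_empty_or_nonempty with rfl | hQ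
  · rw [hEN, sum_empty]
    positivity
  have htrace : ∀ R ⊆ P, R.Nonempty → (#(Q.image fun q => N q ∩ R) : ℝ) ≤ c * #R ^ d₀ := by
    intro R hR hRne
    rw [← ncard_setOf_exists_mem_eq]
    exact hshatter #R hRne.card_pos R hR rfl
  have hN : ∀ T ⊆ P, ∀ Q' ⊆ Q, #T = t → #Q' = t → ∃ q ∈ Q', ¬ T ⊆ N q := by
    intro T hT Q' hQ' hTt hQ't
    by_contra! h
    exact hKtt ⟨T, Q', hT, hQ', hTt, hQ't, fun p hp q hq => (mem_filter.1 (h q hq hp)).2⟩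
  obtain ⟨K, hK, hCK, hKQ⟩ := exists_nat_le_pow_mul_and_mul_le (A := C * #P ^ d₀)
    (by positivity) (n := #Q) (Nat.cast_pos.2 hQ.card_pos) (by omega : d₀ ≠ 0) (2 * t + 8)
  have hsum := sum_le_of_card_filter_le_div_pow (fun q => #(N q)) hd (by omega) (by positivity)
    (fun k hk => card_filter_le_card_le_div_pow hc.le (fun q _ => filter_subset _ P) htrace hN
      (by omega)) hCK
  rw [Real.mul_rpow (by positivity) (by positivity), one_div,
    Real.pow_rpow_inv_natCast (by positivity) (by omega), ← one_div] at hKQ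
  push_cast at hKQ
  have h₁ : 0 ≤ C ^ (1 / d₀ : ℝ) * #Q := by positivity
  have h₂ : 0 ≤ (2 * t + 9) * (#P * (#Q : ℝ) ^ (1 - 1 / d₀ : ℝ)) := by positivity
  rw [hEN]
  linarith

theorem stmt6 (d₀ t : ℕ) (hd : 2 ≤ d₀) (ht : 1 ≤ t) (c : ℝ) (hc : 0 < c) :
    ∃ c₁ : ℝ, ∀ (α β : Type) [DecidableEq α] [DecidableEq β]
      (P : Finset α) (Q : Finset β) (E : Finset (α × β)),
      (∀ e ∈ E, e.1 ∈ P ∧ e.2 ∈ Q) →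
      (∀ z : ℕ, 0 < z → ∀ P' ⊆ P, P'.card = z →
        (({T | ∃ q ∈ Q, T = (P.filter fun p => (p, q) ∈ E) ∩ P'} :
          Set (Finset α)).ncard : ℝ) ≤ c * (z : ℝ) ^ d₀) →
      (¬ ∃ (P'' : Finset α) (Q'' : Finset β), P'' ⊆ P ∧ Q'' ⊆ Q ∧
        P''.card = t ∧ Q''.card = t ∧ ∀ p ∈ P'', ∀ q ∈ Q'', (p, q) ∈ E) →
      (E.card : ℝ) ≤
        c₁ * ((P.card : ℝ) * (Q.card : ℝ) ^ ((1 : ℝ) - 1 / (d₀ : ℝ)) + (Q.card : ℝ)) :=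
  stmt6_general d₀ t hd c hc
end

section
/- For every integer d ≥ 2 there exists a constant c₅ = c₅(d) with the following property. Let n and D be positive integers with D dividing n, and partition the lattice cube [n]^d into D^d axis-parallel subcubes, where for each (i₁, …, i_d) ∈ {0, …, D−1}^d the subcube is {i₁·(n/D)+1, …, (i₁+1)·(n/D)} × ⋯ × {i_d·(n/D)+1, …, (i_d+1)·(n/D)}. Then every sphere in ℝ^d has nonempty intersection with at most c₅ · D^{d−1} of these subcubes. -/
/-!
Write `m = n / D` for the side of a subcube. Every point `x` of a sphere of radius `r` centred
at `c` in dimension `d` has a coordinate `j` with `r ≤ d · |x j - c j|`, so the sphere is covered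
by `2d` caps, indexed by `j` and the sign of `x j - c j`. On such a cap the identity
`(x j - c j)² = r² - ∑_{k ≠ j} (x k - c k)²` together with the lower bound on `|x j - c j|` shows
that two points whose other coordinates are `m`-close have `j`-th coordinates within `d² m`.
Hence among the subcubes met by one cap, those sharing all indices but the `j`-th have `j`-th
indices within `d²` of each other, so one cap meets at most `(2d² + 1) D^(d-1)` subcubes.
-/

open Finset Metric

section Combinatorics

variable {ι : Type*} [Fintype ι] {D : ℕ}

theorem card_le_of_apply_le_apply_add (j : ι) (K : ℕ) (s : Finset (ι → Fin D))
    (h : ∀ x ∈ s, ∀ y ∈ s, (∀ k ≠ j, x k = y k) → (x j : ℕ) ≤ y j + K) :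
    #s ≤ (2 * K + 1) * D ^ (Fintype.card ι - 1) := by
  classical
  set restrict : (ι → Fin D) → ({k // k ≠ j} → Fin D) := fun x k => x k
  have hfiber : ∀ g ∈ s.image restrict, #{x ∈ s | restrict x = g} ≤ 2 * K + 1 := by
    intro g hg
    obtain ⟨x₀, hx₀, rfl⟩ := mem_image.mp hg
    have hagree : ∀ x ∈ {x ∈ s | restrict x = restrict x₀}, ∀ k ≠ j, x k = x₀ k :=
      fun x hx k hk => congrFun (mem_filter.mp hx).2 ⟨k, hk⟩
    calc #{x ∈ s | restrict x = restrict x₀}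
        ≤ #(Icc ((x₀ j : ℕ) - K) (x₀ j + K)) := by
          refine card_le_card_of_injOn (fun x => (x j : ℕ)) (fun x hx => ?_) fun x hx y hy hxy => ?_
          · have h₁ := h x (mem_filter.mp hx).1 x₀ hx₀ (hagree x hx)
            have h₂ := h x₀ hx₀ x (mem_filter.mp hx).1 fun k hk => (hagree x hx k hk).symm
            simp only [coe_Icc, Set.mem_Icc]
            omega
          · funext k
            by_cases hk : k = j
            · exact hk ▸ Fin.ext hxy
            · rw [hagree x hx k hk, hagree y hy k hk]
      _ ≤ 2 * K + 1 := by rw [Nat.card_Icc]; omega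
  calc #s ≤ (2 * K + 1) * #(s.image restrict) := card_le_mul_card_image s _ hfiber
    _ ≤ (2 * K + 1) * D ^ (Fintype.card ι - 1) := by
      gcongr
      refine (card_le_univ _).trans_eq ?_
      rw [Fintype.card_fun, Fintype.card_fin, Fintype.card_subtype_compl, Fintype.card_subtype_eq]

end Combinatorics

section Sphere

variable {ι : Type*} [Fintype ι] {c x y : EuclideanSpace ℝ ι} {r m : ℝ}

theorem sum_sq_sub_apply_eq_of_mem_sphere (hx : x ∈ sphere c r) :
    ∑ k, (x k - c k) ^ 2 = r ^ 2 := by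
  rw [← mem_sphere.mp hx, PiLp.dist_sq_eq_of_L2]
  simp only [Real.dist_eq, sq_abs]

theorem abs_apply_sub_le_radius (hx : x ∈ sphere c r) (k : ι) : |x k - c k| ≤ r := by
  rw [← mem_sphere.mp hx, dist_eq_norm]
  exact PiLp.norm_apply_le (x - c) k

theorem exists_le_card_mul_apply_sub_of_mem_sphere (hr : 0 < r) (hx : x ∈ sphere c r) :
    ∃ j, ∃ ε ∈ ({1, -1} : Finset ℝ), r ≤ Fintype.card ι * (ε * (x j - c j)) := by
  have hsum := sum_sq_sub_apply_eq_of_mem_sphere hx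
  have hne : (univ : Finset ι).Nonempty := nonempty_of_sum_ne_zero (by rw [hsum]; positivity)
  obtain ⟨j, -, hj⟩ := exists_le_of_sum_le hne (f := fun _ => r ^ 2)
    (g := fun k => Fintype.card ι * (x k - c k) ^ 2) (by simp [← mul_sum, hsum])
  have hcard : (1 : ℝ) ≤ Fintype.card ι := by exact_mod_cast hne.card_pos
  have hj' : r ≤ Fintype.card ι * |x j - c j| := by
    refine (abs_le_of_sq_le_sq' ?_ (by positivity)).2
    calc r ^ 2 ≤ Fintype.card ι * (x j - c j) ^ 2 := hj
      _ ≤ Fintype.card ι ^ 2 * (x j - c j) ^ 2 := by gcongr; nlinarith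
      _ = (Fintype.card ι * |x j - c j|) ^ 2 := by rw [mul_pow, sq_abs]
  rcases abs_cases (x j - c j) with ⟨habs, -⟩ | ⟨habs, -⟩
  · exact ⟨j, 1, by simp, by rwa [one_mul, ← habs]⟩
  · exact ⟨j, -1, by simp, by rwa [neg_one_mul, ← habs]⟩

theorem abs_sq_sub_sq_apply_le (hm : 0 ≤ m) (hx : x ∈ sphere c r) (hy : y ∈ sphere c r)
    {j : ι} (hclose : ∀ k ≠ j, |x k - y k| ≤ m) :
    |(x j - c j) ^ 2 - (y j - c j) ^ 2| ≤ 2 * Fintype.card ι * r * m := by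
  classical
  have hr : 0 ≤ r := (abs_nonneg _).trans (abs_apply_sub_le_radius hx j)
  have hdiff : (x j - c j) ^ 2 - (y j - c j) ^ 2
      = ∑ k ∈ univ.erase j, ((y k - c k) ^ 2 - (x k - c k) ^ 2) := by
    have hx' := add_sum_erase _ (fun k => (x k - c k) ^ 2) (mem_univ j)
    have hy' := add_sum_erase _ (fun k => (y k - c k) ^ 2) (mem_univ j)
    rw [sum_sub_distrib]
    linarith [sum_sq_sub_apply_eq_of_mem_sphere hx, sum_sq_sub_apply_eq_of_mem_sphere hy]
  have hterm : ∀ k ∈ univ.erase j, |(y k - c k) ^ 2 - (x k - c k) ^ 2| ≤ 2 * r * m := by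
    intro k hk
    have hxy := hclose k (ne_of_mem_erase hk)
    have hsum : |(y k - c k) + (x k - c k)| ≤ 2 * r := by
      have hxk := abs_apply_sub_le_radius hx k
      have hyk := abs_apply_sub_le_radius hy k
      linarith [abs_add_le (y k - c k) (x k - c k)]
    calc |(y k - c k) ^ 2 - (x k - c k) ^ 2| = |y k - x k| * |(y k - c k) + (x k - c k)| := by
          rw [← abs_mul]; congr 1; ring
      _ ≤ m * (2 * r) := mul_le_mul (abs_sub_comm (y k) (x k) ▸ hxy) hsum (abs_nonneg _) hm
      _ = 2 * r * m := by ring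
  calc |(x j - c j) ^ 2 - (y j - c j) ^ 2|
      ≤ ∑ k ∈ univ.erase j, |(y k - c k) ^ 2 - (x k - c k) ^ 2| := hdiff ▸ abs_sum_le_sum_abs _ _
    _ ≤ #(univ.erase j) * (2 * r * m) := by simpa using sum_le_card_nsmul _ _ _ hterm
    _ ≤ Fintype.card ι * (2 * r * m) := by
      gcongr
      exact_mod_cast (card_erase_le).trans_eq card_univ
    _ = 2 * Fintype.card ι * r * m := by ring

theorem abs_apply_sub_apply_le_of_mem_sphere (hr : 0 < r) (hm : 0 ≤ m)
    (hx : x ∈ sphere c r) (hy : y ∈ sphere c r) {j : ι} {ε : ℝ} (hε : |ε| = 1)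
    (hxj : r ≤ Fintype.card ι * (ε * (x j - c j)))
    (hyj : r ≤ Fintype.card ι * (ε * (y j - c j)))
    (hclose : ∀ k ≠ j, |x k - y k| ≤ m) :
    |x j - y j| ≤ Fintype.card ι ^ 2 * m := by
  set d : ℝ := (Fintype.card ι : ℝ)
  have hsq := abs_sq_sub_sq_apply_le hm hx hy hclose
  -- both points lie in the same cap, so `x j - c j` and `y j - c j` do not cancel
  have hlow : 2 * r ≤ d * |(x j - c j) + (y j - c j)| := by
    calc 2 * r ≤ d * (ε * ((x j - c j) + (y j - c j))) := by linarith
      _ ≤ d * |(x j - c j) + (y j - c j)| := by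
        gcongr
        calc ε * ((x j - c j) + (y j - c j)) ≤ |ε * ((x j - c j) + (y j - c j))| := le_abs_self _
          _ = _ := by rw [abs_mul, hε, one_mul]
  have hfac : |(x j - c j) ^ 2 - (y j - c j) ^ 2| = |x j - y j| * |(x j - c j) + (y j - c j)| := by
    rw [← abs_mul]; congr 1; ring
  refine le_of_mul_le_mul_right ?_ (by positivity : 0 < 2 * r)
  calc |x j - y j| * (2 * r) ≤ |x j - y j| * (d * |(x j - c j) + (y j - c j)|) := by gcongr
    _ = d * |(x j - c j) ^ 2 - (y j - c j) ^ 2| := by rw [hfac]; ring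
    _ ≤ d * (2 * d * r * m) := by gcongr
    _ = d ^ 2 * m * (2 * r) := by ring

end Sphere

section Subcubes

variable {ι : Type*} {D : ℕ}

def latticeSubcube (m : ℕ) (i : ι → Fin D) : Set (EuclideanSpace ℝ ι) :=
  {x | ∀ j, ∃ k : ℤ, (i j : ℤ) * ((m : ℕ) : ℤ) + 1 ≤ k ∧
    k ≤ ((i j : ℤ) + 1) * ((m : ℕ) : ℤ) ∧ x j = (k : ℝ)}

variable {m : ℕ} {i i' : ι → Fin D} {x y : EuclideanSpace ℝ ι}

theorem apply_mem_Icc_of_mem_latticeSubcube (hx : x ∈ latticeSubcube m i) (j : ι) :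
    x j ∈ Set.Icc ((i j : ℝ) * m + 1) (((i j : ℝ) + 1) * m) := by
  obtain ⟨k, hlo, hhi, hxk⟩ := hx j
  rw [hxk]
  have hhi' := Int.cast_mono (R := ℝ) hhi
  push_cast at hhi'
  exact ⟨by exact_mod_cast hlo, hhi'⟩

theorem abs_apply_sub_apply_le_of_mem_latticeSubcube (hx : x ∈ latticeSubcube m i)
    (hy : y ∈ latticeSubcube m i') {k : ι} (hk : i k = i' k) : |x k - y k| ≤ m := by
  obtain ⟨hx₁, hx₂⟩ := apply_mem_Icc_of_mem_latticeSubcube hx k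
  obtain ⟨hy₁, hy₂⟩ := apply_mem_Icc_of_mem_latticeSubcube hy k
  rw [hk] at hx₁ hx₂
  rw [abs_sub_le_iff]
  constructor <;> linarith

theorem apply_le_apply_add_of_mem_latticeSubcube (hx : x ∈ latticeSubcube m i)
    (hy : y ∈ latticeSubcube m i') {j : ι} {K : ℕ} (h : |x j - y j| ≤ K * m) :
    (i j : ℕ) ≤ i' j + K := by
  obtain ⟨hx₁, -⟩ := apply_mem_Icc_of_mem_latticeSubcube hx j
  obtain ⟨-, hy₂⟩ := apply_mem_Icc_of_mem_latticeSubcube hy j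
  by_contra! hlt
  have hlt' : ((i' j : ℕ) + K + 1 : ℝ) ≤ (i j : ℕ) := by exact_mod_cast hlt
  have := (abs_le.mp h).2
  nlinarith [Nat.cast_nonneg (α := ℝ) m]

end Subcubes

section Counting

variable {ι : Type*} [Fintype ι] {D : ℕ}

open Classical in
noncomputable def capSubcubes (m : ℕ) (c : EuclideanSpace ℝ ι) (r : ℝ) (j : ι) (ε : ℝ) :
    Finset (ι → Fin D) :=
  {i | ∃ x ∈ sphere c r ∩ latticeSubcube m i, r ≤ Fintype.card ι * (ε * (x j - c j))}

theorem card_capSubcubes_le (m : ℕ) (c : EuclideanSpace ℝ ι) {r : ℝ} (hr : 0 < r) (j : ι)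
    {ε : ℝ} (hε : |ε| = 1) :
    #(capSubcubes m c r j ε : Finset (ι → Fin D))
      ≤ (2 * Fintype.card ι ^ 2 + 1) * D ^ (Fintype.card ι - 1) := by
  classical
  refine card_le_of_apply_le_apply_add j _ _ fun i hi i' hi' hagree => ?_
  obtain ⟨x, ⟨hxS, hxQ⟩, hxj⟩ := (mem_filter.mp hi).2
  obtain ⟨y, ⟨hyS, hyQ⟩, hyj⟩ := (mem_filter.mp hi').2
  refine apply_le_apply_add_of_mem_latticeSubcube hxQ hyQ ?_
  push_cast
  exact abs_apply_sub_apply_le_of_mem_sphere hr (Nat.cast_nonneg m) hxS hyS hε hxj hyj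
    fun k hk => abs_apply_sub_apply_le_of_mem_latticeSubcube hxQ hyQ (hagree k hk)

theorem ncard_setOf_sphere_inter_latticeSubcube_nonempty_le (m : ℕ) (c : EuclideanSpace ℝ ι)
    {r : ℝ} (hr : 0 < r) :
    {i : ι → Fin D | (sphere c r ∩ latticeSubcube m i).Nonempty}.ncard
      ≤ 2 * Fintype.card ι * ((2 * Fintype.card ι ^ 2 + 1) * D ^ (Fintype.card ι - 1)) := by
  classical
  set signs : Finset ℝ := {1, -1}
  set caps := (univ ×ˢ signs).biUnion fun p => capSubcubes (D := D) m c r p.1 p.2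
  have hsub : {i : ι → Fin D | (sphere c r ∩ latticeSubcube m i).Nonempty} ⊆ caps := by
    rintro i ⟨x, hx⟩
    obtain ⟨j, ε, hε, hxj⟩ := exists_le_card_mul_apply_sub_of_mem_sphere hr hx.1
    simp only [caps, coe_biUnion, Set.mem_iUnion]
    exact ⟨(j, ε), mem_product.mpr ⟨mem_univ j, hε⟩,
      mem_filter.mpr ⟨mem_univ i, x, hx, hxj⟩⟩
  have habs : ∀ ε ∈ signs, |ε| = 1 := by simp [signs]
  calc {i : ι → Fin D | (sphere c r ∩ latticeSubcube m i).Nonempty}.ncard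
      ≤ #caps := (Set.ncard_le_ncard hsub (finite_toSet _)).trans_eq (Set.ncard_coe_finset _)
    _ ≤ ∑ p ∈ univ ×ˢ signs, #(capSubcubes (D := D) m c r p.1 p.2) := card_biUnion_le
    _ ≤ ∑ _p ∈ univ ×ˢ signs, (2 * Fintype.card ι ^ 2 + 1) * D ^ (Fintype.card ι - 1) :=
      sum_le_sum fun p hp => card_capSubcubes_le m c hr p.1 (habs p.2 (mem_product.mp hp).2)
    _ ≤ 2 * Fintype.card ι * ((2 * Fintype.card ι ^ 2 + 1) * D ^ (Fintype.card ι - 1)) := by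
      rw [sum_const, card_product, card_univ, smul_eq_mul]
      exact Nat.mul_le_mul_right _ (by rw [mul_comm 2]; exact Nat.mul_le_mul_left _ card_le_two)

end Counting

theorem stmt7_general (d : ℕ) :
    ∃ c₅ : ℝ, ∀ n D : ℕ, 0 < n → 0 < D → D ∣ n →
      ∀ (ctr : EuclideanSpace ℝ (Fin d)) (r : ℝ), 0 < r →
        (({i : Fin d → Fin D | (Metric.sphere ctr r ∩
          {x : EuclideanSpace ℝ (Fin d) | ∀ j, ∃ k : ℤ,
            (i j : ℤ) * ((n / D : ℕ) : ℤ) + 1 ≤ k ∧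
            k ≤ ((i j : ℤ) + 1) * ((n / D : ℕ) : ℤ) ∧
            x j = (k : ℝ)}).Nonempty}).ncard : ℝ) ≤ c₅ * (D : ℝ) ^ (d - 1) := by
  refine ⟨2 * d * (2 * d ^ 2 + 1), fun n D _ _ _ ctr r hr => ?_⟩
  have h := ncard_setOf_sphere_inter_latticeSubcube_nonempty_le (D := D) (n / D) ctr hr
  rw [Fintype.card_fin] at h
  calc _ ≤ ((2 * d * ((2 * d ^ 2 + 1) * D ^ (d - 1)) : ℕ) : ℝ) := by exact_mod_cast h
    _ = _ := by push_cast; ring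

theorem stmt7 (d : ℕ) (hd : 2 ≤ d) :
    ∃ c₅ : ℝ, ∀ n D : ℕ, 0 < n → 0 < D → D ∣ n →
      ∀ (ctr : EuclideanSpace ℝ (Fin d)) (r : ℝ), 0 < r →
        (({i : Fin d → Fin D | (Metric.sphere ctr r ∩
          {x : EuclideanSpace ℝ (Fin d) | ∀ j, ∃ k : ℤ,
            (i j : ℤ) * ((n / D : ℕ) : ℤ) + 1 ≤ k ∧
            k ≤ ((i j : ℤ) + 1) * ((n / D : ℕ) : ℤ) ∧
            x j = (k : ℝ)}).Nonempty}).ncard : ℝ) ≤ c₅ * (D : ℝ) ^ (d - 1) :=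
  stmt7_general d
end

section
/- For every integer d ≥ 2 there exists a constant c = c(d) > 0 such that for every positive integer n there is a subset A of the lattice cube [n]^d with |A| ≥ c·n such that no d+1 points of A lie on a common hyperplane and no 2d points of A lie on a common sphere. -/
noncomputable section

/-- The lattice cube `[n]^d`: points of `ℝ^d` all of whose coordinates are
integers in `{1, …, n}`. -/
def latticeCube (d n : ℕ) : Set (EuclideanSpace ℝ (Fin d)) :=
  {x | ∀ i, ∃ k : ℤ, 1 ≤ k ∧ k ≤ (n : ℤ) ∧ x i = (k : ℝ)}

/-!
Take a prime `p ∈ (n/2, n]` and `m` with `2dm < p`, and let `A` consist of the points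
`(t, t², …, t^d) mod p` (shifted into `{1, …, p}^d`) for `t = 1, …, m`. If `d + 1` points of `A`
lay on a hyperplane, or `2d` on a sphere, the real linear relation satisfied by the integer
columns `(1, x₁, …, x_d)`, resp. `(‖x‖², 1, x₁, …, x_d)`, would descend to a nontrivial relation
mod `p`. For a hyperplane this is a nonzero polynomial of degree `≤ d` vanishing at `d + 1`
distinct parameters, which is impossible. For a sphere it is a polynomial
`a ∑ᵢ (Xⁱ + 1)² + (degree ≤ d)` vanishing at the `2d` parameters; its `X^(2d-1)` coefficient is
zero, so by Vieta `a · ∑ t = 0`, whereas `0 < ∑ t ≤ 2dm < p` (and `a = 0` is the hyperplane case).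
-/

open Matrix Polynomial

theorem Matrix.exists_ne_zero_mulVec_map_zmod_eq_zero {m n : Type*} [Finite m] [Fintype n]
    {M : Matrix m n ℤ} {p : ℕ} (hp : p ≠ 1) {u : n → ℝ} (hu : u ≠ 0)
    (hMu : M.map (Int.cast : ℤ → ℝ) *ᵥ u = 0) :
    ∃ y : n → ZMod p, y ≠ 0 ∧ M.map (Int.cast : ℤ → ZMod p) *ᵥ y = 0 := by
  classical
  have hℝ : ¬ LinearIndependent ℝ fun j ↦ algebraMap ℤ ℝ ∘ M.col j := by
    change ¬ LinearIndependent ℝ (M.map (Int.cast : ℤ → ℝ)).col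
    rw [← Matrix.mulVec_injective_iff]
    exact fun h ↦ hu (h (by simpa using hMu))
  obtain ⟨z, hMz, hz⟩ : ∃ z, M *ᵥ z = 0 ∧ z ≠ 0 := by
    rw [linearIndependent_algebraMap_comp_iff, ← Matrix.mulVec_injective_iff,
      ← M.coe_mulVecLin, injective_iff_map_eq_zero] at hℝ
    push Not at hℝ
    exact hℝ
  -- Dividing by the gcd of its entries makes the integer kernel vector primitive mod `p`.
  obtain ⟨i₀, hi₀⟩ := Function.ne_iff.mp hz
  obtain ⟨z', hzz', hgcd⟩ := Finset.univ.extract_gcd z ⟨i₀, Finset.mem_univ i₀⟩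
  have hg : Finset.univ.gcd z ≠ 0 := fun h ↦
    hi₀ (Finset.gcd_eq_zero_iff.mp h i₀ (Finset.mem_univ i₀))
  have hMz' : M *ᵥ z' = 0 := by
    rw [show z = Finset.univ.gcd z • z' from funext fun i ↦ hzz' i (Finset.mem_univ i),
      Matrix.mulVec_smul] at hMz
    exact (smul_eq_zero.mp hMz).resolve_left hg
  refine ⟨Int.cast ∘ z', fun h ↦ ?_, ?_⟩
  · have hdvd : (p : ℤ) ∣ Finset.univ.gcd z' := Finset.dvd_gcd fun i _ ↦
      (ZMod.intCast_zmod_eq_zero_iff_dvd _ _).mp (congrFun h i)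
    rw [hgcd, Int.natCast_dvd_ofNat] at hdvd
    exact hp (Nat.dvd_one.mp hdvd)
  · ext j
    simpa [hMz'] using (RingHom.map_mulVec (Int.castRingHom (ZMod p)) M z' j).symm

theorem Polynomial.coeff_pred_eq_neg_mul_sum_of_eval_eq_zero {R : Type*} [CommRing R]
    [IsDomain R] {n : ℕ} (hn : 0 < n) {f : R[X]} (hf : f.natDegree ≤ n) {τ : Fin n → R}
    (hτ : Function.Injective τ) (hroot : ∀ j, f.eval (τ j) = 0) :
    f.coeff (n - 1) = -(f.coeff n * ∑ j, τ j) := by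
  set P : R[X] := ∏ j, (X - C (τ j))
  have hP : P.natDegree = n := by simp [P]
  have hfP : f = C (f.coeff n) * P := by
    refine eq_of_degree_sub_lt_of_eval_index_eq Finset.univ hτ.injOn ?_ fun j _ ↦ ?_
    · rw [Finset.card_univ, Fintype.card_fin, degree_lt_iff_coeff_zero]
      intro m hm
      rw [coeff_sub, coeff_C_mul, sub_eq_zero]
      rcases hm.eq_or_lt with rfl | hlt
      · rw [← hP, (monic_prod_X_sub_C τ _).coeff_natDegree, mul_one]
      · rw [coeff_eq_zero_of_natDegree_lt (hf.trans_lt hlt),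
          coeff_eq_zero_of_natDegree_lt (hP.trans_lt hlt), mul_zero]
    · simp [hroot, P, eval_prod, Finset.prod_eq_zero (Finset.mem_univ j)]
  have hcoeff := prod_X_sub_C_coeff_card_pred Finset.univ τ (by simpa using hn)
  rw [Finset.card_univ, Fintype.card_fin] at hcoeff
  conv_lhs => rw [hfP]
  rw [coeff_C_mul, hcoeff, mul_neg]

lemma Polynomial.coeff_X_pow_add_one_sq {R : Type*} [CommRing R] (n m : ℕ) :
    (((X : R[X]) ^ n + 1) ^ 2).coeff m =
      (if m = 2 * n then 1 else 0) + (if m = n then 2 else 0) + if m = 0 then 1 else 0 := by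
  simp [add_sq, coeff_X_pow, coeff_one, ← pow_mul, mul_comm]

lemma Set.ncard_image_inter_lt_of_forall_not {α β : Type*} [Finite α] {f : α → β}
    {s : Set α} {X : Set β} {N : ℕ}
    (h : ∀ τ : Fin N → α, Function.Injective τ → (∀ j, τ j ∈ s) → ¬ ∀ j, f (τ j) ∈ X) :
    (f '' s ∩ X).ncard < N := by
  by_contra! hN
  rw [← Set.image_inter_preimage] at hN
  have hcard := hN.trans (Set.ncard_image_le (Set.toFinite _))
  have : Fintype ↥(s ∩ f ⁻¹' X) := Fintype.ofFinite _
  rw [← Nat.card_coe_set_eq, Nat.card_eq_fintype_card, ← Fintype.card_fin N] at hcard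
  obtain ⟨e⟩ := Function.Embedding.nonempty_of_card_le hcard
  exact h (fun j ↦ e j) (Subtype.val_injective.comp e.injective) (fun j ↦ (e j).2.1)
    fun j ↦ (e j).2.2

lemma ZMod.sum_ne_zero_of_val_mem_Icc {p N m : ℕ} [NeZero p] (hN : 0 < N) (hNm : N * m < p)
    {τ : Fin N → ZMod p} (hτ : ∀ j, (τ j).val ∈ Set.Icc 1 m) : ∑ j, τ j ≠ 0 := by
  have hsum : ∑ j, τ j = ((∑ j, (τ j).val : ℕ) : ZMod p) := by simp
  rw [hsum, Ne, ZMod.natCast_eq_zero_iff]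
  intro hdvd
  have hpos : 0 < ∑ j, (τ j).val :=
    Finset.sum_pos' (fun j _ ↦ Nat.zero_le _) ⟨⟨0, hN⟩, Finset.mem_univ _, (hτ _).1⟩
  have hle : ∑ j, (τ j).val ≤ N * m := by
    simpa using Finset.sum_le_sum fun j (_ : j ∈ Finset.univ) ↦ (hτ j).2
  exact absurd (Nat.le_of_dvd hpos hdvd) (by omega)

theorem AffineSubspace.exists_inner_eq_of_direction_ne_top {E : Type*} [NormedAddCommGroup E]
    [InnerProductSpace ℝ E] [FiniteDimensional ℝ E] {H : AffineSubspace ℝ E}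
    (hH : H.direction ≠ ⊤) {x₀ : E} (hx₀ : x₀ ∈ H) :
    ∃ w ≠ 0, ∀ x ∈ H, inner ℝ w x = inner ℝ w x₀ := by
  obtain ⟨w, hw, hw0⟩ := (Submodule.ne_bot_iff _).mp
    (mt Submodule.orthogonal_eq_bot_iff.mp hH)
  refine ⟨w, hw0, fun x hx ↦ ?_⟩
  rw [← sub_eq_zero, ← inner_sub_right]
  exact Submodule.inner_left_of_mem_orthogonal (AffineSubspace.vsub_mem_direction hx hx₀) hw

section momentNormSq

variable {R : Type*} [CommRing R]

variable (R) in
def momentNormSq (d : ℕ) : R[X] := ∑ i : Fin d, (X ^ ((i : ℕ) + 1) + 1) ^ 2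

lemma natDegree_momentNormSq_le (d : ℕ) : (momentNormSq R d).natDegree ≤ 2 * d := by
  refine natDegree_sum_le_of_forall_le _ _ fun i _ ↦ natDegree_pow_le.trans ?_
  have : (X ^ ((i : ℕ) + 1) + 1 : R[X]).natDegree ≤ (i : ℕ) + 1 :=
    (natDegree_add_le _ _).trans (by simpa using natDegree_X_pow_le _)
  have := i.isLt
  nlinarith

lemma coeff_momentNormSq_two_mul {d : ℕ} (hd : 0 < d) :
    (momentNormSq R d).coeff (2 * d) = 1 := by
  rw [momentNormSq, finsetSum_coeff, Finset.sum_eq_single ⟨d - 1, by omega⟩]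
  · dsimp only
    rw [coeff_X_pow_add_one_sq, if_pos (by omega), if_neg (by omega), if_neg (by omega)]
    simp
  · intro i _ hi
    have : (i : ℕ) ≠ d - 1 := fun h ↦ hi (Fin.ext h)
    rw [coeff_X_pow_add_one_sq, if_neg (by omega), if_neg (by omega), if_neg (by omega)]
    simp
  · simp

lemma coeff_momentNormSq_two_mul_sub_one {d : ℕ} (hd : 2 ≤ d) :
    (momentNormSq R d).coeff (2 * d - 1) = 0 := by
  refine (finsetSum_coeff _ _ _).trans (Finset.sum_eq_zero fun i _ ↦ ?_)
  have := i.isLt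
  rw [coeff_X_pow_add_one_sq, if_neg (by omega), if_neg (by omega), if_neg (by omega)]
  simp

theorem sum_eq_zero_of_eval_momentNormSq_eq_zero [IsDomain R] {d : ℕ} (hd : 2 ≤ d)
    {τ : Fin (2 * d) → R} (hτ : Function.Injective τ) {a : R} {b : Fin (d + 1) → R}
    (hab : a ≠ 0 ∨ b ≠ 0)
    (h : ∀ j, a * (momentNormSq R d).eval (τ j) + ∑ k, b k * τ j ^ (k : ℕ) = 0) :
    ∑ j, τ j = 0 := by
  have ha : a ≠ 0 := by
    rintro rfl
    refine hab.resolve_left (not_not.mpr rfl) ?_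
    exact Matrix.eq_zero_of_forall_index_sum_mul_pow_eq_zero
      (hτ.comp (Fin.castLE_injective (by omega))) fun j ↦ by simpa using h (Fin.castLE _ j)
  set low : R[X] := ∑ k : Fin (d + 1), C (b k) * X ^ (k : ℕ)
  have hlow : low.natDegree ≤ d :=
    natDegree_sum_le_of_forall_le _ _ fun k _ ↦ natDegree_C_mul_X_pow_le _ _ |>.trans (by omega)
  set f : R[X] := C a * momentNormSq R d + low
  have hf : f.natDegree ≤ 2 * d := natDegree_add_le_of_degree_le
    ((natDegree_C_mul_le _ _).trans (natDegree_momentNormSq_le d)) (hlow.trans (by omega))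
  have hcoeff (m : ℕ) (hm : d < m) : f.coeff m = a * (momentNormSq R d).coeff m := by
    rw [coeff_add, coeff_C_mul, coeff_eq_zero_of_natDegree_lt (hlow.trans_lt hm), add_zero]
  have hvieta := coeff_pred_eq_neg_mul_sum_of_eval_eq_zero (by omega) hf hτ
    fun j ↦ by simpa [f, low, eval_finsetSum] using h j
  rw [hcoeff _ (by omega), hcoeff _ (by omega), coeff_momentNormSq_two_mul (by omega),
    coeff_momentNormSq_two_mul_sub_one hd, mul_zero, mul_one, zero_eq_neg] at hvieta
  exact (mul_eq_zero.mp hvieta).resolve_left ha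

end momentNormSq

def momentPoint (p d : ℕ) (t : ZMod p) : EuclideanSpace ℝ (Fin d) :=
  WithLp.toLp 2 fun i ↦ ((t ^ ((i : ℕ) + 1)).val : ℝ) + 1

lemma momentPoint_injective {p d : ℕ} [NeZero p] (hd : 0 < d) :
    Function.Injective (momentPoint p d) := by
  intro t t' h
  have h0 := congrArg (fun x : EuclideanSpace ℝ (Fin d) ↦ x ⟨0, hd⟩) h
  simp only [momentPoint, zero_add, pow_one, add_left_inj, Nat.cast_inj] at h0
  exact ZMod.val_injective p h0

lemma momentPoint_mem_latticeCube {p : ℕ} [NeZero p] (d : ℕ) (t : ZMod p) :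
    momentPoint p d t ∈ latticeCube d p := fun i ↦
  ⟨(t ^ ((i : ℕ) + 1)).val + 1, by omega, by have := ZMod.val_lt (t ^ ((i : ℕ) + 1)); omega,
    by simp [momentPoint]⟩

lemma latticeCube_mono (d : ℕ) {n n' : ℕ} (h : n ≤ n') :
    latticeCube d n ⊆ latticeCube d n' :=
  fun _ hx i ↦ (hx i).imp fun _ ⟨h1, h2, h3⟩ ↦ ⟨h1, h2.trans (by exact_mod_cast h), h3⟩

theorem not_forall_momentPoint_mem_of_direction_ne_top {p d : ℕ} [Fact p.Prime]
    {τ : Fin (d + 1) → ZMod p} (hτ : Function.Injective τ)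
    {H : AffineSubspace ℝ (EuclideanSpace ℝ (Fin d))} (hH : H.direction ≠ ⊤) :
    ¬ ∀ j, momentPoint p d (τ j) ∈ H := by
  intro hmem
  obtain ⟨w, hw, hwH⟩ := H.exists_inner_eq_of_direction_ne_top hH (hmem 0)
  set c := inner ℝ w (momentPoint p d (τ 0))
  set M : Matrix (Fin (d + 1)) (Fin (d + 1)) ℤ := .of fun j k ↦ ((τ j ^ (k : ℕ)).val : ℤ)
  set u : Fin (d + 1) → ℝ := Fin.cons (∑ i, w i - c) fun i ↦ w i
  have hu : u ≠ 0 := fun h ↦ hw (by ext i; simpa [u] using congrFun h i.succ)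
  have hMu : M.map Int.cast *ᵥ u = 0 := by
    ext j
    have hj := hwH _ (hmem j)
    simp only [EuclideanSpace.inner_eq_star_dotProduct, momentPoint, dotProduct, star_trivial,
      add_mul, one_mul, Finset.sum_add_distrib] at hj
    simp only [Matrix.mulVec, dotProduct, Fin.sum_univ_succ, Matrix.map_apply, Matrix.of_apply,
      u, M, Fin.cons_zero, Fin.cons_succ, Fin.val_zero, pow_zero, Fin.val_succ,
      Int.cast_natCast, ZMod.val_one, Nat.cast_one, Pi.zero_apply]
    linarith
  obtain ⟨y, hy, hMy⟩ :=
    Matrix.exists_ne_zero_mulVec_map_zmod_eq_zero (Fact.out : p.Prime).ne_one hu hMu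
  have hV : M.map Int.cast = vandermonde τ := by ext; simp [M, vandermonde]
  exact hy (eq_zero_of_mulVec_eq_zero (det_vandermonde_ne_zero_iff.mpr hτ) (hV ▸ hMy))

theorem sum_eq_zero_of_forall_momentPoint_mem_sphere {p d : ℕ} [Fact p.Prime] (hd : 2 ≤ d)
    {τ : Fin (2 * d) → ZMod p} (hτ : Function.Injective τ) {ctr : EuclideanSpace ℝ (Fin d)}
    {r : ℝ} (hmem : ∀ j, momentPoint p d (τ j) ∈ Metric.sphere ctr r) : ∑ j, τ j = 0 := by
  -- Column `none` is `‖x‖²`, column `some k` is `tᵏ mod p`; `u` encodes `‖x - ctr‖² = r²`.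
  set M : Matrix (Fin (2 * d)) (Option (Fin (d + 1))) ℤ := .of fun j k ↦
    k.elim (∑ i : Fin d, (((τ j ^ ((i : ℕ) + 1)).val : ℤ) + 1) ^ 2) fun k ↦ (τ j ^ (k : ℕ)).val
  set u : Option (Fin (d + 1)) → ℝ := fun k ↦
    k.elim 1 (Fin.cons (∑ i, ctr i ^ 2 - r ^ 2 - 2 * ∑ i, ctr i) fun i ↦ -2 * ctr i)
  have hu : u ≠ 0 := fun h ↦ one_ne_zero (congrFun h none)
  have hMu : M.map Int.cast *ᵥ u = 0 := by
    ext j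
    have hj := EuclideanSpace.dist_sq_eq (momentPoint p d (τ j)) ctr
    rw [hmem j] at hj
    simp only [momentPoint, Real.dist_eq, sq_abs] at hj
    have hexpand (a b : ℝ) :
        (a + 1 - b) ^ 2 = (a + 1) ^ 2 + b ^ 2 - 2 * b + a * (-2 * b) := by
      ring
    simp only [hexpand, Finset.sum_add_distrib, Finset.sum_sub_distrib, ← Finset.mul_sum] at hj
    simp only [Matrix.mulVec, dotProduct, Fintype.sum_option, Fin.sum_univ_succ,
      Matrix.map_apply, Matrix.of_apply, u, M, Option.elim_none, Option.elim_some, Fin.cons_zero,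
      Fin.cons_succ, Fin.val_zero, pow_zero, Fin.val_succ, Int.cast_natCast, ZMod.val_one,
      Pi.zero_apply]
    push_cast
    linarith
  obtain ⟨y, hy, hMy⟩ :=
    Matrix.exists_ne_zero_mulVec_map_zmod_eq_zero (Fact.out : p.Prime).ne_one hu hMu
  refine sum_eq_zero_of_eval_momentNormSq_eq_zero hd hτ (a := y none) (b := fun k ↦ y (some k))
    ?_ fun j ↦ ?_
  · by_contra! h
    exact hy (funext fun k ↦ k.rec h.1 fun k ↦ congrFun h.2 k)
  · have hj := congrFun hMy j
    simp only [mulVec, dotProduct, ZMod.natCast_val, map_apply, of_apply, Fintype.sum_option,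
      Option.elim_none, Int.cast_sum, Int.cast_pow, Int.cast_add, ZMod.intCast_cast,
      ZMod.cast_id', id_eq, Int.cast_one, Option.elim_some, Pi.zero_apply, M] at hj
    rw [momentNormSq, eval_finsetSum]
    simpa [mul_comm] using hj

def InGeneralPosition (d : ℕ) (A : Set (EuclideanSpace ℝ (Fin d))) : Prop :=
  (∀ H : AffineSubspace ℝ (EuclideanSpace ℝ (Fin d)), H.direction ≠ ⊤ →
    (A ∩ H).ncard ≤ d) ∧
  ∀ (ctr : EuclideanSpace ℝ (Fin d)) (r : ℝ), (A ∩ Metric.sphere ctr r).ncard ≤ 2 * d - 1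

lemma inGeneralPosition_singleton {d : ℕ} (hd : 0 < d) (x : EuclideanSpace ℝ (Fin d)) :
    InGeneralPosition d {x} := by
  have hle (X : Set (EuclideanSpace ℝ (Fin d))) : ({x} ∩ X).ncard ≤ 1 :=
    (Set.ncard_le_ncard Set.inter_subset_left).trans (Set.ncard_singleton x).le
  exact ⟨fun H _ ↦ (hle H).trans hd, fun ctr r ↦ (hle _).trans (by omega)⟩

theorem exists_inGeneralPosition_subset_latticeCube {d p m : ℕ} [Fact p.Prime] (hd : 2 ≤ d)
    (hm : 2 * d * m < p) :
    ∃ A ⊆ latticeCube d p, A.Finite ∧ A.ncard = m ∧ InGeneralPosition d A := by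
  set S : Set (ZMod p) := ZMod.val ⁻¹' Set.Icc 1 m
  refine ⟨momentPoint p d '' S, ?_, (Set.toFinite S).image _, ?_, ?_, fun ctr r ↦ ?_⟩
  · rintro _ ⟨t, -, rfl⟩
    exact momentPoint_mem_latticeCube d t
  · rw [Set.ncard_image_of_injective _ (momentPoint_injective (by omega)),
      Set.ncard_preimage_of_injective_subset_range (ZMod.val_injective p), Set.ncard_Icc_nat]
    · omega
    · exact fun k hk ↦ ⟨k, ZMod.val_natCast_of_lt (by nlinarith [hk.2])⟩
  · exact fun H hH ↦ Nat.lt_succ_iff.mp <| Set.ncard_image_inter_lt_of_forall_not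
      fun τ hτ _ ↦ not_forall_momentPoint_mem_of_direction_ne_top hτ hH
  · have := Set.ncard_image_inter_lt_of_forall_not (s := S) (X := Metric.sphere ctr r)
      (N := 2 * d) fun τ hτ hS hX ↦ ZMod.sum_ne_zero_of_val_mem_Icc (by omega) hm hS
        (sum_eq_zero_of_forall_momentPoint_mem_sphere hd hτ hX)
    omega

lemma exists_prime_le_and_mul_lt {d n : ℕ} (hd : 0 < d) (hn : 8 * d ≤ n) :
    ∃ p m : ℕ, p.Prime ∧ p ≤ n ∧ 2 * d * m < p ∧ n ≤ 8 * d * m := by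
  obtain ⟨p, hp, hnp, hpn⟩ := Nat.exists_prime_lt_and_le_two_mul (n / 2) (by omega)
  obtain ⟨m, hm, hpm⟩ : ∃ m, 2 * d * m < p ∧ p ≤ 2 * d * (m + 1) :=
    ⟨(p - 1) / (2 * d), by have := Nat.mul_div_le (p - 1) (2 * d); have := hp.one_lt; omega,
      by have := Nat.lt_mul_div_succ (p - 1) (show 0 < 2 * d by omega); omega⟩
  have hm1 : 1 ≤ m := by
    by_contra! h0
    rw [Nat.lt_one_iff.mp h0] at hpm
    omega
  have h2p : n < 2 * p := by omega
  exact ⟨p, m, hp, by omega, hm, by nlinarith [Nat.mul_le_mul_left d hm1]⟩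

theorem exists_inGeneralPosition_subset_latticeCube_le_ncard {d n : ℕ} (hd : 2 ≤ d)
    (hn : 0 < n) :
    ∃ A ⊆ latticeCube d n, A.Finite ∧ n ≤ 8 * d * A.ncard ∧ InGeneralPosition d A := by
  by_cases hsmall : n < 8 * d
  · refine ⟨{WithLp.toLp 2 fun _ ↦ 1}, ?_, Set.finite_singleton _, ?_,
      inGeneralPosition_singleton (by omega) _⟩
    · rintro _ rfl i
      exact ⟨1, le_rfl, by exact_mod_cast hn, by simp⟩
    · rw [Set.ncard_singleton]
      omega
  · obtain ⟨p, m, hp, hpn, hm, hnm⟩ := exists_prime_le_and_mul_lt (by omega) (not_lt.mp hsmall)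
    have : Fact p.Prime := ⟨hp⟩
    obtain ⟨A, hAp, hAfin, hAcard, hA⟩ := exists_inGeneralPosition_subset_latticeCube hd hm
    exact ⟨A, hAp.trans (latticeCube_mono d hpn), hAfin, hAcard ▸ hnm, hA⟩

theorem stmt9 (d : ℕ) (hd : 2 ≤ d) :
    ∃ c : ℝ, 0 < c ∧ ∀ n : ℕ, 0 < n →
      ∃ A : Set (EuclideanSpace ℝ (Fin d)), A ⊆ latticeCube d n ∧ A.Finite ∧
        c * (n : ℝ) ≤ (A.ncard : ℝ) ∧
        (∀ H : AffineSubspace ℝ (EuclideanSpace ℝ (Fin d)),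
          (H : Set (EuclideanSpace ℝ (Fin d))).Nonempty →
          Module.finrank ℝ H.direction = d - 1 →
          (A ∩ (H : Set (EuclideanSpace ℝ (Fin d)))).ncard ≤ d) ∧
        (∀ (ctr : EuclideanSpace ℝ (Fin d)) (r : ℝ), 0 < r →
          (A ∩ Metric.sphere ctr r).ncard ≤ 2 * d - 1) := by
  have hdR : (0 : ℝ) < d := by exact_mod_cast (show 0 < d by omega)
  refine ⟨1 / (8 * d), by positivity, fun n hn ↦ ?_⟩
  obtain ⟨A, hAn, hAfin, hcard, hhyp, hsph⟩ :=
    exists_inGeneralPosition_subset_latticeCube_le_ncard hd hn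
  refine ⟨A, hAn, hAfin, ?_, fun H _ hH ↦ hhyp H fun htop ↦ ?_, fun ctr r _ ↦ hsph ctr r⟩
  · have hcardR : (n : ℝ) ≤ 8 * d * A.ncard := by exact_mod_cast hcard
    rw [div_mul_eq_mul_div, one_mul, div_le_iff₀ (by positivity)]
    linarith
  · rw [htop, finrank_top, finrank_euclideanSpace_fin] at hH
    omega
end
end
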